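/- Under the hypotheses making the real case hold (F finite of characteristic 2, deg c < 2 deg b, t² + bt + c without rational roots and t² + bt + c having a root in F((1/x)) of positive degree), if a unit ε of R = F[x][t]/(t² + bt + c) has valuation |ε| = 1 (degree 0 as a Laurent series under the embedding R → F((1/x)) sending Δ to a root), then ε ∈ F*. -/

import Mathlib

/-!
Conjugation `t ↦ -b - t` on `R = F[x][t]/(t² + bt + c)` gives `ε ε̄ = N(ε) ∈ F[x]`, a unit when `ε`
is, hence a nonzero constant. Mapping `t` to `Δ₀`, the conjugate `ε̄` goes to `u + (-b - Δ₀) v`, so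
`|ε| |ε̄| = 1` and `|ε| = 1` force `|ε̄| = 1`. In characteristic 2 the trace `ε + ε̄` is `b v`, of
degree `deg b + deg v > 0` unless `v = 0`, contradicting the ultrametric inequality. Then
`u² = N(ε)` is a nonzero constant.
-/

open Polynomial

/-- The image of a polynomial in F((1/x)): evaluate at x = X⁻¹, where the
variable x corresponds to the Laurent series `single (-1) 1` of degree 1
(so that the degree of a Laurent series is minus its order). -/
noncomputable def polyToLaurentInv (F : Type) [Field F] (p : Polynomial F) :
    LaurentSeries F :=
  Polynomial.aeval (HahnSeries.single (-1 : ℤ) (1 : F)) p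

open AdjoinRoot

section Quadratic

variable {R : Type*} [CommRing R] (b c : R)

noncomputable abbrev monicQuadratic : R[X] := X ^ 2 + C b * X + C c

def quadraticNorm (p q : R) : R := p ^ 2 - b * p * q + c * q ^ 2

lemma monic_monicQuadratic : (monicQuadratic b c).Monic := by
  rw [monicQuadratic, add_assoc]
  exact monic_X_pow_add (by compute_degree!)

lemma natDegree_monicQuadratic [Nontrivial R] : (monicQuadratic b c).natDegree = 2 := by
  unfold monicQuadratic; compute_degree!

lemma eval₂_monicQuadratic {S : Type*} [CommRing S] (φ : R →+* S) (x : S) :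
    eval₂ φ x (monicQuadratic b c) = x ^ 2 + φ b * x + φ c := by
  simp [monicQuadratic]

variable {b c} in
lemma eval₂_monicQuadratic_neg_sub {S : Type*} [CommRing S] {φ : R →+* S} {x : S}
    (hx : eval₂ φ x (monicQuadratic b c) = 0) :
    eval₂ φ (-φ b - x) (monicQuadratic b c) = 0 := by
  rw [eval₂_monicQuadratic] at hx ⊢
  linear_combination hx

noncomputable def quadraticConj :
    AdjoinRoot (monicQuadratic b c) →+* AdjoinRoot (monicQuadratic b c) :=
  lift (of _) (-of _ b - root _) (eval₂_monicQuadratic_neg_sub (eval₂_root _))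

lemma quadraticConj_of (r : R) : quadraticConj b c (of _ r) = of _ r :=
  lift_of _

lemma quadraticConj_root : quadraticConj b c (root _) = -of _ b - root _ :=
  lift_root _

lemma mul_quadraticConj (p q : R) :
    (of _ p + root _ * of _ q) * quadraticConj b c (of _ p + root _ * of _ q) =
      of (monicQuadratic b c) (quadraticNorm b c p q) := by
  have hroot := eval₂_root (monicQuadratic b c)
  rw [eval₂_monicQuadratic] at hroot
  simp only [map_add, map_mul, quadraticConj_of, quadraticConj_root, quadraticNorm, map_sub,
    map_pow]
  linear_combination -(of _ q) ^ 2 * hroot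

lemma add_quadraticConj (p q : R) :
    (of _ p + root _ * of _ q) + quadraticConj b c (of _ p + root _ * of _ q) =
      of (monicQuadratic b c) (2 * p - b * q) := by
  simp only [map_add, map_mul, quadraticConj_of, quadraticConj_root, map_sub, map_ofNat]
  ring

lemma AdjoinRoot.exists_eq_of_add_root_mul_of [Nontrivial R] {f : R[X]} (hf : f.Monic)
    (hdeg : f.natDegree ≤ 2) (x : AdjoinRoot f) : ∃ p q, x = of f p + root f * of f q := by
  obtain ⟨g, rfl⟩ := mk_surjective x
  have hr : (g %ₘ f).degree ≤ 1 :=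
    Order.le_of_lt_succ <| (degree_modByMonic_lt g hf).trans_le (degree_le_of_natDegree_le hdeg)
  refine ⟨(g %ₘ f).coeff 0, (g %ₘ f).coeff 1, ?_⟩
  rw [← mk_leftInverse hf (mk f g), modByMonicHom_mk]
  conv_lhs => rw [eq_X_add_C_of_degree_le_one hr]
  rw [map_add, map_mul, mk_C, mk_C, mk_X, add_comm, mul_comm]

variable {b c} in
lemma isUnit_quadraticNorm [IsDomain R] {p q : R}
    (h : IsUnit (of (monicQuadratic b c) p + root _ * of _ q)) :
    IsUnit (quadraticNorm b c p q) := by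
  obtain ⟨w, hw⟩ := h.exists_right_inv
  obtain ⟨p', q', rfl⟩ := exists_eq_of_add_root_mul_of (monic_monicQuadratic b c)
    (natDegree_monicQuadratic b c).le w
  refine IsUnit.of_mul_eq_one (quadraticNorm b c p' q')
    (of.injective_of_degree_ne_zero (f := monicQuadratic b c) ?_ ?_)
  · rw [degree_eq_natDegree (monic_monicQuadratic b c).ne_zero, natDegree_monicQuadratic]
    decide
  · rw [map_mul, map_one, ← mul_quadraticConj, ← mul_quadraticConj, mul_mul_mul_comm, ← map_mul,
      hw, map_one, one_mul]

end Quadratic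

section LaurentEmbedding

variable {F : Type} [Field F]

variable (F) in
noncomputable def polyToLaurentInvHom : F[X] →+* LaurentSeries F :=
  (aeval (HahnSeries.single (-1 : ℤ) (1 : F))).toRingHom

lemma polyToLaurentInvHom_apply (p : F[X]) : polyToLaurentInvHom F p = polyToLaurentInv F p :=
  rfl

lemma polyToLaurentInv_monomial (n : ℕ) (a : F) :
    polyToLaurentInv F (monomial n a) = HahnSeries.single (-(n : ℤ)) a := by
  rw [polyToLaurentInv, aeval_monomial, HahnSeries.single_pow, LaurentSeries.algebraMap_apply,
    HahnSeries.C_apply, HahnSeries.single_mul_single]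
  simp

lemma coeff_polyToLaurentInv (p : F[X]) (n : ℤ) :
    (polyToLaurentInv F p).coeff n = if n ≤ 0 then p.coeff (-n).toNat else 0 := by
  induction p using Polynomial.induction_on' with
  | add p q hp hq =>
    rw [← polyToLaurentInvHom_apply, map_add, HahnSeries.coeff_add, polyToLaurentInvHom_apply,
      polyToLaurentInvHom_apply, hp, hq]
    split_ifs <;> simp
  | monomial i a =>
    rw [polyToLaurentInv_monomial, HahnSeries.coeff_single, coeff_monomial]
    split_ifs <;> first | rfl | omega

lemma polyToLaurentInv_ne_zero {p : F[X]} (hp : p ≠ 0) : polyToLaurentInv F p ≠ 0 := by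
  intro h
  have h1 := coeff_polyToLaurentInv p (-(p.natDegree : ℤ))
  simp only [h, HahnSeries.coeff_zero, neg_nonpos, Nat.cast_nonneg, if_true, neg_neg,
    Int.toNat_natCast] at h1
  exact leadingCoeff_ne_zero.mpr hp h1.symm

lemma order_polyToLaurentInv {p : F[X]} (hp : p ≠ 0) :
    (polyToLaurentInv F p).order = -(p.natDegree : ℤ) := by
  apply le_antisymm
  · apply HahnSeries.order_le_of_coeff_ne_zero
    simpa [coeff_polyToLaurentInv] using leadingCoeff_ne_zero.mpr hp
  · have h := HahnSeries.coeff_order_eq_zero.not.mpr (polyToLaurentInv_ne_zero hp)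
    rw [coeff_polyToLaurentInv] at h
    split_ifs at h with h0
    · have := le_natDegree_of_ne_zero h
      omega
    · exact absurd rfl h

lemma order_eq_zero_of_mul_eq_polyToLaurentInv {x y : LaurentSeries F} {N : F[X]}
    (hN : IsUnit N) (hx : x.order = 0) (hxy : x * y = polyToLaurentInv F N) : y.order = 0 := by
  have hxy0 : x * y ≠ 0 := hxy ▸ polyToLaurentInv_ne_zero hN.ne_zero
  have h := HahnSeries.order_mul (left_ne_zero_of_mul hxy0) (right_ne_zero_of_mul hxy0)
  rw [hxy, order_polyToLaurentInv hN.ne_zero, natDegree_eq_zero_of_isUnit hN, hx] at h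
  simpa using h.symm

lemma eq_zero_of_add_eq_polyToLaurentInv_mul {b v : F[X]} (hb : 1 ≤ b.natDegree)
    {x y : LaurentSeries F} (hx : x.order = 0) (hy : y.order = 0)
    (hxy : x + y = polyToLaurentInv F (b * v)) : v = 0 := by
  by_contra hv
  have hb0 : b ≠ 0 := ne_zero_of_natDegree_gt hb
  have hbv : b * v ≠ 0 := mul_ne_zero hb0 hv
  have h := HahnSeries.min_order_le_order_add (hxy ▸ polyToLaurentInv_ne_zero hbv)
  rw [hx, hy, hxy, order_polyToLaurentInv hbv, natDegree_mul hb0 hv] at h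
  omega

end LaurentEmbedding

theorem unit_of_valuation_one_is_constant_general
    (F : Type) [Field F] [CharP F 2] (b c : Polynomial F)
    (hb : 1 ≤ b.natDegree)
    (Δ₀ : LaurentSeries F)
    (hΔ : Δ₀ ^ 2 + polyToLaurentInv F b * Δ₀ + polyToLaurentInv F c = 0) :
    ∀ (f : Polynomial (Polynomial F)), f = X ^ 2 + C b * X + C c →
    ∀ u v : Polynomial F,
      IsUnit (AdjoinRoot.of f u + AdjoinRoot.root f * AdjoinRoot.of f v) →
      (polyToLaurentInv F u + Δ₀ * polyToLaurentInv F v).order = 0 →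
      ∃ a : F, a ≠ 0 ∧ u = C a ∧ v = 0 := by
  rintro f rfl u v hε hord
  set ε := of (monicQuadratic b c) u + root _ * of _ v
  let ψ := lift (polyToLaurentInvHom F) Δ₀ <| by rwa [eval₂_monicQuadratic]
  have hψε : ψ ε = polyToLaurentInv F u + Δ₀ * polyToLaurentInv F v := by
    simp [ψ, ε, polyToLaurentInvHom_apply]
  have hN : IsUnit (quadraticNorm b c u v) := isUnit_quadraticNorm hε
  have hmul : ψ ε * ψ (quadraticConj b c ε) = polyToLaurentInv F (quadraticNorm b c u v) := by
    rw [← map_mul, mul_quadraticConj, lift_of, polyToLaurentInvHom_apply]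
  have hadd : ψ ε + ψ (quadraticConj b c ε) = polyToLaurentInv F (b * v) := by
    rw [← map_add, add_quadraticConj, lift_of, polyToLaurentInvHom_apply, CharTwo.two_eq_zero,
      zero_mul, zero_sub, CharTwo.neg_eq]
  rw [← hψε] at hord
  obtain rfl : v = 0 := eq_zero_of_add_eq_polyToLaurentInv_mul hb hord
    (order_eq_zero_of_mul_eq_polyToLaurentInv hN hord hmul) hadd
  have hu : IsUnit u := by simpa [quadraticNorm, isUnit_pow_iff] using hN
  obtain ⟨a, ha, rfl⟩ := Polynomial.isUnit_iff.mp hu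
  exact ⟨a, ha.ne_zero, rfl, rfl⟩

/-- Real case (F finite of char 2, deg c < 2 deg b, no rational roots, a root
Δ₀ of positive degree in F((1/x))): a unit ε = u + Δv of R whose image
in F((1/x)) has degree 0 (valuation |ε| = 1) is a nonzero constant. -/
theorem unit_of_valuation_one_is_constant
    (F : Type) [Field F] [Fintype F] [CharP F 2] (b c : Polynomial F)
    (hb : 1 ≤ b.natDegree) (hc : c ≠ 0) (hdeg : c.natDegree < 2 * b.natDegree)
    (hnoroot : ∀ ρ : RatFunc F,
      ρ ^ 2 + algebraMap (Polynomial F) (RatFunc F) b * ρ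
        + algebraMap (Polynomial F) (RatFunc F) c ≠ 0)
    (Δ₀ : LaurentSeries F)
    (hΔ : Δ₀ ^ 2 + polyToLaurentInv F b * Δ₀ + polyToLaurentInv F c = 0)
    (hΔpos : Δ₀.order < 0) :
    ∀ (f : Polynomial (Polynomial F)), f = X ^ 2 + C b * X + C c →
    ∀ u v : Polynomial F,
      IsUnit (AdjoinRoot.of f u + AdjoinRoot.root f * AdjoinRoot.of f v) →
      (polyToLaurentInv F u + Δ₀ * polyToLaurentInv F v).order = 0 →
      ∃ a : F, a ≠ 0 ∧ u = C a ∧ v = 0 :=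
  unit_of_valuation_one_is_constant_general F b c hb Δ₀ hΔ
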